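/- Let G be a finite simple graph with vertex set V, let k be a positive integer, and let T ⊆ V satisfy |Γ_T(Z)| ≥ k − 1 for every T-cut Z (T is (k−1)-connected). Fix r ∈ T and S ⊆ V \ T, and let D(r,S) be the family of all T-cuts X with |Γ_T(X)| = k − 1 and r ∉ X⁺ that are not covered by any T-path all of whose vertices lie in T ∪ S. Let X, Y ∈ D(r,S). If X is minimal in D(r,S) (with respect to inclusion), then X ∩ Y = ∅ or X ⊆ Y; if X is maximal in D(r,S), then X ∩ Y = ∅ or Y ⊆ X. -/

import Mathlib

/-- `nbr G X` is Γ(X): the set of vertices outside `X` adjacent to a vertex of `X`. -/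
def nbr {V : Type*} [Fintype V] [DecidableEq V] (G : SimpleGraph V) [DecidableRel G.Adj]
    (X : Finset V) : Finset V :=
  Finset.univ.filter (fun v => v ∉ X ∧ ∃ u ∈ X, G.Adj u v)

/-- `cl G X` is X⁺ = X ∪ Γ(X). -/
def cl {V : Type*} [Fintype V] [DecidableEq V] (G : SimpleGraph V) [DecidableRel G.Adj]
    (X : Finset V) : Finset V :=
  X ∪ nbr G X

/-- `covered G T S X` means some T-path, all of whose vertices lie in `T ∪ S`,
covers the T-cut `X`. -/
def covered {V : Type*} [Fintype V] [DecidableEq V] (G : SimpleGraph V) [DecidableRel G.Adj]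
    (T S X : Finset V) : Prop :=
  ∃ (a b : V) (p : G.Walk a b), p.IsPath ∧ a ∈ X ∧ b ∈ T \ cl G X ∧
    (∀ w ∈ p.support, w ≠ a → w ≠ b → w ∉ T) ∧ (∀ w ∈ p.support, w ∈ T ∪ S)

/-- The family D(r,S) of demand cuts avoiding `r` that are not covered by a T-path
in G[T ∪ S]. -/
def Dfam {V : Type*} [Fintype V] [DecidableEq V] (G : SimpleGraph V) [DecidableRel G.Adj]
    (T S : Finset V) (k : ℕ) (r : V) : Set (Finset V) :=
  {X | X ⊆ T ∧ X.Nonempty ∧ (T \ cl G X).Nonempty ∧ (nbr G X ∩ T).card = k - 1 ∧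
    r ∉ cl G X ∧ ¬ covered G T S X}

/-! `X ↦ |Γ_T(X)|` is submodular. If `X, Y ∈ D(r,S)` intersect, the vertex `r` shows that
`X ∩ Y` and `X ∪ Y` are `T`-cuts, so by `(k-1)`-connectivity both have at least `k - 1`
neighbours in `T`; submodularity then makes both counts exactly `k - 1` and the inequality tight.
Tightness gives `T ∩ X⁺ ∩ Y⁺ ⊆ (X ∩ Y)⁺`, so a `T`-path covering `X ∩ Y` (or `X ∪ Y`) would
cover `X` or `Y`. Hence `X ∩ Y, X ∪ Y ∈ D(r,S)`, and minimality resp. maximality of `X` gives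
`X ∩ Y = X` resp. `X ∪ Y = X`. -/

/-- `Γ_T(X)`. -/
def nbrIn {V : Type*} [Fintype V] [DecidableEq V] (G : SimpleGraph V) [DecidableRel G.Adj]
    (T X : Finset V) : Finset V :=
  nbr G X ∩ T

lemma Finset.union_eq_and_inter_eq_of_card_add_le {α : Type*} [DecidableEq α]
    {A B C D : Finset α} (hU : A ∪ B ⊆ C ∪ D) (hI : A ∩ B ⊆ C ∩ D)
    (hcard : C.card + D.card ≤ A.card + B.card) : A ∪ B = C ∪ D ∧ A ∩ B = C ∩ D := by
  have hAB := Finset.card_union_add_card_inter A B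
  have hCD := Finset.card_union_add_card_inter C D
  have hU' := Finset.card_le_card hU
  have hI' := Finset.card_le_card hI
  exact ⟨Finset.eq_of_subset_of_card_le hU (by omega),
    Finset.eq_of_subset_of_card_le hI (by omega)⟩

section

variable {V : Type*} [Fintype V] [DecidableEq V] (G : SimpleGraph V) [DecidableRel G.Adj]

lemma mem_nbr {X : Finset V} {v : V} : v ∈ nbr G X ↔ v ∉ X ∧ ∃ u ∈ X, G.Adj u v := by
  simp [nbr]

lemma mem_cl {X : Finset V} {v : V} : v ∈ cl G X ↔ v ∈ X ∨ ∃ u ∈ X, G.Adj u v := by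
  by_cases hv : v ∈ X <;> simp [cl, mem_nbr, hv]

lemma mem_nbrIn {T X : Finset V} {v : V} :
    v ∈ nbrIn G T X ↔ v ∈ T ∧ v ∉ X ∧ ∃ u ∈ X, G.Adj u v := by
  simp only [nbrIn, Finset.mem_inter, mem_nbr]
  tauto

lemma cl_mono {X Y : Finset V} (h : X ⊆ Y) : cl G X ⊆ cl G Y := by
  intro v
  simp only [mem_cl]
  rintro (hv | ⟨u, hu, huv⟩)
  exacts [Or.inl (h hv), Or.inr ⟨u, h hu, huv⟩]

lemma nbrIn_union_union_nbrIn_inter_subset (T X Y : Finset V) :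
    nbrIn G T (X ∪ Y) ∪ nbrIn G T (X ∩ Y) ⊆ nbrIn G T X ∪ nbrIn G T Y := by
  intro v
  simp only [Finset.mem_union, Finset.mem_inter, mem_nbrIn]
  grind

lemma nbrIn_union_inter_nbrIn_inter_subset (T X Y : Finset V) :
    nbrIn G T (X ∪ Y) ∩ nbrIn G T (X ∩ Y) ⊆ nbrIn G T X ∩ nbrIn G T Y := by
  intro v
  simp only [Finset.mem_union, Finset.mem_inter, mem_nbrIn]
  grind

lemma card_nbrIn_union_add_card_nbrIn_inter_le (T X Y : Finset V) :
    (nbrIn G T (X ∪ Y)).card + (nbrIn G T (X ∩ Y)).card ≤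
      (nbrIn G T X).card + (nbrIn G T Y).card := by
  rw [← Finset.card_union_add_card_inter, ← Finset.card_union_add_card_inter (nbrIn G T X)]
  exact add_le_add (Finset.card_le_card (nbrIn_union_union_nbrIn_inter_subset G T X Y))
    (Finset.card_le_card (nbrIn_union_inter_nbrIn_inter_subset G T X Y))

/-- Tightness forces `Γ_T(X ∪ Y) ∪ Γ_T(X ∩ Y) = Γ_T(X) ∪ Γ_T(Y)`, and likewise for `∩`. -/
lemma mem_cl_inter_of_card_nbrIn_tight {T X Y : Finset V}
    (htight : (nbrIn G T X).card + (nbrIn G T Y).card ≤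
      (nbrIn G T (X ∪ Y)).card + (nbrIn G T (X ∩ Y)).card)
    {v : V} (hvT : v ∈ T) (hvX : v ∈ cl G X) (hvY : v ∈ cl G Y) : v ∈ cl G (X ∩ Y) := by
  obtain ⟨hU, hI⟩ := Finset.union_eq_and_inter_eq_of_card_add_le
    (nbrIn_union_union_nbrIn_inter_subset G T X Y)
    (nbrIn_union_inter_nbrIn_inter_subset G T X Y) htight
  have hU' := Finset.ext_iff.1 hU v
  have hI' := Finset.ext_iff.1 hI v
  simp only [Finset.mem_union, Finset.mem_inter, mem_nbrIn, mem_cl] at hU' hI' hvX hvY ⊢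
  grind

lemma covered_or_covered {T S X Y Z : Finset V} (h : covered G T S Z)
    (hends : ∀ a ∈ Z, ∀ b ∈ T \ cl G Z, (a ∈ X ∧ b ∉ cl G X) ∨ (a ∈ Y ∧ b ∉ cl G Y)) :
    covered G T S X ∨ covered G T S Y := by
  obtain ⟨a, b, p, hp, ha, hb, hinner, hsupp⟩ := h
  rcases hends a ha b hb with ⟨haX, hbX⟩ | ⟨haY, hbY⟩
  · exact Or.inl ⟨a, b, p, hp, haX, Finset.mem_sdiff.2 ⟨(Finset.mem_sdiff.1 hb).1, hbX⟩,
      hinner, hsupp⟩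
  · exact Or.inr ⟨a, b, p, hp, haY, Finset.mem_sdiff.2 ⟨(Finset.mem_sdiff.1 hb).1, hbY⟩,
      hinner, hsupp⟩

lemma covered_or_covered_of_covered_union {T S X Y : Finset V}
    (h : covered G T S (X ∪ Y)) : covered G T S X ∨ covered G T S Y := by
  refine covered_or_covered G h fun a ha b hb => ?_
  have hbU := (Finset.mem_sdiff.1 hb).2
  rcases Finset.mem_union.1 ha with haX | haY
  · exact Or.inl ⟨haX, fun h => hbU (cl_mono G Finset.subset_union_left h)⟩
  · exact Or.inr ⟨haY, fun h => hbU (cl_mono G Finset.subset_union_right h)⟩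

lemma covered_or_covered_of_covered_inter {T S X Y : Finset V}
    (htight : (nbrIn G T X).card + (nbrIn G T Y).card ≤
      (nbrIn G T (X ∪ Y)).card + (nbrIn G T (X ∩ Y)).card)
    (h : covered G T S (X ∩ Y)) : covered G T S X ∨ covered G T S Y := by
  refine covered_or_covered G h fun a ha b hb => ?_
  obtain ⟨hbT, hbI⟩ := Finset.mem_sdiff.1 hb
  by_cases hbX : b ∈ cl G X
  · exact Or.inr ⟨(Finset.mem_inter.1 ha).2,
      fun hbY => hbI (mem_cl_inter_of_card_nbrIn_tight G htight hbT hbX hbY)⟩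
  · exact Or.inl ⟨(Finset.mem_inter.1 ha).1, hbX⟩

end

namespace Dfam

variable {V : Type*} [Fintype V] [DecidableEq V] {G : SimpleGraph V} [DecidableRel G.Adj]
  {T S : Finset V} {k : ℕ} {r : V}

lemma inter_mem_and_union_mem
    (hTconn : ∀ Z : Finset V, Z ⊆ T → Z.Nonempty → (T \ cl G Z).Nonempty →
      k - 1 ≤ (nbr G Z ∩ T).card)
    (hr : r ∈ T) {X Y : Finset V} (hX : X ∈ Dfam G T S k r) (hY : Y ∈ Dfam G T S k r)
    (hXY : (X ∩ Y).Nonempty) : X ∩ Y ∈ Dfam G T S k r ∧ X ∪ Y ∈ Dfam G T S k r := by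
  obtain ⟨hXT, hXne, -, hXcard, hrX, hXunc⟩ := hX
  obtain ⟨hYT, -, -, hYcard, hrY, hYunc⟩ := hY
  have hrI : r ∉ cl G (X ∩ Y) := fun h => hrX (cl_mono G Finset.inter_subset_left h)
  have hrU : r ∉ cl G (X ∪ Y) := by
    simp only [mem_cl, Finset.mem_union] at hrX hrY ⊢
    grind
  have hIT : X ∩ Y ⊆ T := Finset.inter_subset_left.trans hXT
  have hUT : X ∪ Y ⊆ T := Finset.union_subset hXT hYT
  have hUne : (X ∪ Y).Nonempty := hXne.mono Finset.subset_union_left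
  have hTI : (T \ cl G (X ∩ Y)).Nonempty := ⟨r, Finset.mem_sdiff.2 ⟨hr, hrI⟩⟩
  have hTU : (T \ cl G (X ∪ Y)).Nonempty := ⟨r, Finset.mem_sdiff.2 ⟨hr, hrU⟩⟩
  have hXcard : (nbrIn G T X).card = k - 1 := hXcard
  have hYcard : (nbrIn G T Y).card = k - 1 := hYcard
  have hIcard : k - 1 ≤ (nbrIn G T (X ∩ Y)).card := hTconn _ hIT hXY hTI
  have hUcard : k - 1 ≤ (nbrIn G T (X ∪ Y)).card := hTconn _ hUT hUne hTU
  have hsub := card_nbrIn_union_add_card_nbrIn_inter_le G T X Y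
  have htight : (nbrIn G T X).card + (nbrIn G T Y).card ≤
      (nbrIn G T (X ∪ Y)).card + (nbrIn G T (X ∩ Y)).card := by omega
  refine ⟨⟨hIT, hXY, hTI, (by omega : (nbrIn G T (X ∩ Y)).card = k - 1), hrI, fun hcov => ?_⟩,
    ⟨hUT, hUne, hTU, (by omega : (nbrIn G T (X ∪ Y)).card = k - 1), hrU, fun hcov => ?_⟩⟩
  · exact (covered_or_covered_of_covered_inter G htight hcov).elim hXunc hYunc
  · exact (covered_or_covered_of_covered_union G hcov).elim hXunc hYunc

end Dfam

theorem stmt_6_general {V : Type*} [Fintype V] [DecidableEq V]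
    (G : SimpleGraph V) [DecidableRel G.Adj] (k : ℕ)
    (T : Finset V)
    -- T is (k-1)-connected: |Γ_T(Z)| ≥ k-1 for every T-cut Z
    (hTconn : ∀ Z : Finset V, Z ⊆ T → Z.Nonempty → (T \ cl G Z).Nonempty →
      k - 1 ≤ (nbr G Z ∩ T).card)
    (r : V) (hr : r ∈ T) (S : Finset V)
    (X Y : Finset V) (hX : X ∈ Dfam G T S k r) (hY : Y ∈ Dfam G T S k r) :
    ((∀ Z ∈ Dfam G T S k r, Z ⊆ X → Z = X) → X ∩ Y = ∅ ∨ X ⊆ Y) ∧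
    ((∀ Z ∈ Dfam G T S k r, X ⊆ Z → Z = X) → X ∩ Y = ∅ ∨ Y ⊆ X) := by
  rcases (X ∩ Y).eq_empty_or_nonempty with hXY | hXY
  · exact ⟨fun _ => Or.inl hXY, fun _ => Or.inl hXY⟩
  obtain ⟨hI, hU⟩ := Dfam.inter_mem_and_union_mem hTconn hr hX hY hXY
  exact ⟨fun hmin => Or.inr (Finset.inter_eq_left.1 (hmin _ hI Finset.inter_subset_left)),
    fun hmax => Or.inr (Finset.union_eq_left.1 (hmax _ hU Finset.subset_union_left))⟩

theorem stmt_6 {V : Type*} [Fintype V] [DecidableEq V]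
    (G : SimpleGraph V) [DecidableRel G.Adj] (k : ℕ) (hk : 1 ≤ k)
    (T : Finset V)
    -- T is (k-1)-connected: |Γ_T(Z)| ≥ k-1 for every T-cut Z
    (hTconn : ∀ Z : Finset V, Z ⊆ T → Z.Nonempty → (T \ cl G Z).Nonempty →
      k - 1 ≤ (nbr G Z ∩ T).card)
    (r : V) (hr : r ∈ T) (S : Finset V) (hS : S ⊆ Finset.univ \ T)
    (X Y : Finset V) (hX : X ∈ Dfam G T S k r) (hY : Y ∈ Dfam G T S k r) :
    ((∀ Z ∈ Dfam G T S k r, Z ⊆ X → Z = X) → X ∩ Y = ∅ ∨ X ⊆ Y) ∧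
    ((∀ Z ∈ Dfam G T S k r, X ⊆ Z → Z = X) → X ∩ Y = ∅ ∨ Y ⊆ X) :=
  stmt_6_general G k T hTconn r hr S X Y hX hY
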